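/- arXiv:2508.04397 — 4 statements merged into one kernel-verified Lean document; each statement's English description precedes it below -/
import Mathlib

section
/- For n ≥ 2 and integers k, p, q with p, q ≥ 0, if T⁻ᵖ Aᵏ T^q = I (the identity matrix), then k = 0 and p = q, where A = [[1,1],[0,1]] and T = [[n,0],[0,1]] are matrices over ℚ. -/
lemma Apow (k : ℤ) : (!![(1 : ℚ), 1; 0, 1]) ^ k = !![1, (k : ℚ); 0, 1] := by
  have hdet : IsUnit (!![(1 : ℚ), 1; 0, 1]).det := by
    simp [Matrix.det_fin_two_of]
  induction k using Int.induction_on with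
  | zero => ext i j; fin_cases i <;> fin_cases j <;> simp
  | succ m ih =>
      rw [Matrix.zpow_add_one hdet, ih]
      ext i j; fin_cases i <;> fin_cases j <;>
        simp [Matrix.mul_apply, Fin.sum_univ_two] <;> push_cast <;> ring
  | pred m ih =>
      rw [show (-(m : ℤ) - 1) = (-(m : ℤ)) - 1 by ring,
        Matrix.zpow_sub_one hdet, ih]
      have hinv : (!![(1 : ℚ), 1; 0, 1])⁻¹ = !![1, -1; 0, 1] := by
        rw [Matrix.inv_def]
        ext i j; fin_cases i <;> fin_cases j <;>
          simp [Matrix.det_fin_two_of, Matrix.adjugate_fin_two]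
      rw [hinv]
      ext i j; fin_cases i <;> fin_cases j <;>
        simp [Matrix.mul_apply, Fin.sum_univ_two] <;> push_cast <;> ring

lemma Tpow (n : ℤ) (m : ℕ) :
    (!![(n : ℚ), 0; 0, 1]) ^ m = !![((n : ℚ)) ^ m, 0; 0, 1] := by
  induction m with
  | zero => ext i j; fin_cases i <;> fin_cases j <;> simp
  | succ m ih =>
      rw [pow_succ, ih]
      ext i j; fin_cases i <;> fin_cases j <;>
        simp [Matrix.mul_apply, Fin.sum_univ_two, pow_succ]

/-- For `n ≥ 2` and integers `k, p, q` with `p, q ≥ 0`, if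
`T^{-p} * A^k * T^q = 1` (with `A = [[1,1],[0,1]]`, `T = [[n,0],[0,1]]` over `ℚ`),
then `k = 0` and `p = q`. -/
theorem stmt1 (n : ℤ) (hn : 2 ≤ n) (k p q : ℤ) (hp : 0 ≤ p) (hq : 0 ≤ q)
    (h : (!![(n : ℚ), 0; 0, 1]) ^ (-p) * (!![(1 : ℚ), 1; 0, 1]) ^ k
        * (!![(n : ℚ), 0; 0, 1]) ^ q = 1) :
    k = 0 ∧ p = q := by
  have hn1 : (1 : ℚ) < (n : ℚ) := by exact_mod_cast lt_of_lt_of_le one_lt_two hn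
  have hdetT : IsUnit (!![(n : ℚ), 0; 0, 1]).det := by
    simp only [Matrix.det_fin_two_of, mul_one, mul_zero, sub_zero, isUnit_iff_ne_zero]
    linarith
  have key : (!![(1 : ℚ), 1; 0, 1]) ^ k * (!![(n : ℚ), 0; 0, 1]) ^ q
      = (!![(n : ℚ), 0; 0, 1]) ^ p := by
    have := congrArg (fun M => (!![(n : ℚ), 0; 0, 1]) ^ p * M) h
    simp only [← mul_assoc, ← Matrix.zpow_add hdetT, add_neg_cancel, zpow_zero,
      one_mul, mul_one] at this
    exact this
  rw [Apow, show q = (q.toNat : ℤ) by omega, show p = (p.toNat : ℤ) by omega,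
    zpow_natCast, zpow_natCast, Tpow, Tpow] at key
  have h01 := congrFun (congrFun key 0) 1
  have h00 := congrFun (congrFun key 0) 0
  simp [Matrix.mul_apply, Fin.sum_univ_two] at h01 h00
  refine ⟨by exact_mod_cast h01, ?_⟩
  have := (pow_right_injective₀ (by linarith) hn1.ne') h00
  omega
end

section
/- For n ≥ 2, in the Baumslag–Solitar group BS(n,1) = ⟨a, t | t⁻¹aⁿt = a⟩, two elements t^{-p₁} a^{k₁} t^{p₁+c₁} and t^{-p₂} a^{k₂} t^{p₂+c₂} (with p₁, p₂ ≥ 0) are equal if and only if c₁ = c₂ and k₁/n^{p₁} = k₂/n^{p₂} in ℚ. -/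
/-- The single defining relator of the Baumslag–Solitar group `BS(n,1)`:
`t⁻¹ * aⁿ * t * a⁻¹`, where `a = FreeGroup.of false`, `t = FreeGroup.of true`. -/
def BSrel (n : ℤ) : Set (FreeGroup Bool) :=
  {(FreeGroup.of true)⁻¹ * (FreeGroup.of false) ^ n * FreeGroup.of true * (FreeGroup.of false)⁻¹}

/-- The solvable Baumslag–Solitar group `BS(n,1) = ⟨a, t ∣ t⁻¹aⁿt = a⟩`. -/
abbrev BS (n : ℤ) : Type := PresentedGroup (BSrel n)

/-- The generator `a` of `BS(n,1)`. -/
def BSa (n : ℤ) : BS n := PresentedGroup.of false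

/-- The generator `t` of `BS(n,1)`. -/
def BSt (n : ℤ) : BS n := PresentedGroup.of true

/-- `apow n k p` represents `a^(k/nᵖ) := t⁻ᵖ aᵏ tᵖ` in `BS(n,1)`. -/
def apow (n k p : ℤ) : BS n := (BSt n) ^ (-p) * (BSa n) ^ k * (BSt n) ^ p

lemma addRight_pow (m : ℕ) : (Equiv.addRight (1:ℚ))^m = Equiv.addRight (m:ℚ) := by
  induction m with
  | zero => ext x; simp
  | succ m ih => ext x; simp [pow_succ, ih, Equiv.Perm.mul_apply]; ring

lemma addRight_zpow (k : ℤ) : (Equiv.addRight (1:ℚ))^k = Equiv.addRight (k:ℚ) := by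
  cases k with
  | ofNat m => simpa using addRight_pow m
  | negSucc m =>
      rw [zpow_negSucc, addRight_pow]
      ext x
      simp [Equiv.Perm.inv_def]

lemma mulLeft₀_pow (q : ℚ) (hq : q ≠ 0) (m : ℕ) :
    (Equiv.mulLeft₀ q hq)^m = Equiv.mulLeft₀ (q^m) (pow_ne_zero m hq) := by
  induction m with
  | zero => ext x; simp
  | succ m ih => ext x; simp [pow_succ, ih, Equiv.Perm.mul_apply]; ring

lemma mulLeft₀_zpow (q : ℚ) (hq : q ≠ 0) (k : ℤ) :
    (Equiv.mulLeft₀ q hq)^k = Equiv.mulLeft₀ (q^k) (zpow_ne_zero k hq) := by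
  cases k with
  | ofNat m => simpa using mulLeft₀_pow q hq m
  | negSucc m =>
      rw [zpow_negSucc, mulLeft₀_pow]
      ext x
      simp [Equiv.Perm.inv_def, zpow_negSucc]

/-- The affine representation of `BS(n,1)` on `ℚ`: `a ↦ (· + 1)`, `t ↦ (n * ·)`. -/
noncomputable def BSmap (n : ℤ) (hn : (n:ℚ) ≠ 0) : BS n →* Equiv.Perm ℚ :=
  PresentedGroup.toGroup
    (f := fun b => if b then Equiv.mulLeft₀ (n:ℚ) hn else Equiv.addRight 1)
    (by
      rintro r rfl
      simp only [map_mul, map_inv, map_zpow, FreeGroup.lift_apply_of, Bool.false_eq_true,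
        if_true, if_false]
      rw [addRight_zpow]
      ext x
      simp [Equiv.Perm.mul_apply, Equiv.Perm.inv_def, mul_sub, hn]
      field_simp
      ring)

lemma BSmap_a (n : ℤ) (hn : (n:ℚ) ≠ 0) : BSmap n hn (BSa n) = Equiv.addRight 1 :=
  PresentedGroup.toGroup.of _

lemma BSmap_t (n : ℤ) (hn : (n:ℚ) ≠ 0) : BSmap n hn (BSt n) = Equiv.mulLeft₀ (n:ℚ) hn :=
  PresentedGroup.toGroup.of _

/-- The defining relation in `BS(n,1)`. -/
lemma BS_rel (n : ℤ) : BSt n * BSa n * (BSt n)⁻¹ = (BSa n) ^ n := by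
  have h : ((FreeGroup.of true)⁻¹ * (FreeGroup.of false) ^ n * FreeGroup.of true *
      (FreeGroup.of false)⁻¹ : FreeGroup Bool) ∈ Subgroup.normalClosure (BSrel n) :=
    Subgroup.subset_normalClosure rfl
  have h1 : PresentedGroup.mk (BSrel n) ((FreeGroup.of true)⁻¹ * FreeGroup.of false ^ n *
      FreeGroup.of true * (FreeGroup.of false)⁻¹) = 1 := (QuotientGroup.eq_one_iff _).mpr h
  rw [map_mul, map_mul, map_mul, map_inv, map_inv, map_zpow] at h1
  have h2 : (BSt n)⁻¹ * (BSa n) ^ n * BSt n = BSa n := mul_inv_eq_one.mp h1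
  calc BSt n * BSa n * (BSt n)⁻¹
      = BSt n * ((BSt n)⁻¹ * (BSa n) ^ n * BSt n) * (BSt n)⁻¹ := by rw [h2]
    _ = (BSa n) ^ n := by group

lemma BS_conj (n : ℤ) (k : ℤ) : BSt n * (BSa n)^k * (BSt n)⁻¹ = (BSa n)^(n*k) := by
  rw [zpow_mul, ← BS_rel n, conj_zpow]

lemma BS_shift (n : ℤ) (d : ℕ) (k : ℤ) :
    (BSt n)^(d:ℤ) * (BSa n)^k * (BSt n)^(-(d:ℤ)) = (BSa n)^(n^d*k) := by
  induction d generalizing k with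
  | zero => simp
  | succ d ih =>
      have : (BSt n)^((d:ℤ)+1) * (BSa n)^k * (BSt n)^(-((d:ℤ)+1))
          = (BSt n)^(d:ℤ) * (BSt n * (BSa n)^k * (BSt n)⁻¹) * (BSt n)^(-(d:ℤ)) := by
        rw [zpow_add_one, neg_add, zpow_add, zpow_neg_one]
        group
      push_cast
      rw [this, BS_conj, ih]
      ring_nf

lemma BS_back (n : ℤ) (p₁ p₂ k₁ k₂ c : ℤ) (hp : p₁ ≤ p₂)
    (hk : k₂ = n^(p₂-p₁).toNat * k₁) :
    (BSt n)^(-p₁) * (BSa n)^k₁ * (BSt n)^(p₁+c)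
      = (BSt n)^(-p₂) * (BSa n)^k₂ * (BSt n)^(p₂+c) := by
  have hd : ((p₂-p₁).toNat : ℤ) = p₂ - p₁ := Int.toNat_of_nonneg (by omega)
  have hd : ((p₂-p₁).toNat : ℤ) = p₂ - p₁ := Int.toNat_of_nonneg (by omega)
  rw [hk, ← BS_shift n (p₂-p₁).toNat k₁, hd,
    show (-p₁:ℤ) = -p₂ + (p₂-p₁) by ring,
    show (p₁+c:ℤ) = -(p₂-p₁) + (p₂+c) by ring, zpow_add, zpow_add]
  group

/-- For `n ≥ 2`, in `BS(n,1)`, `t^{-p₁} a^{k₁} t^{p₁+c₁} = t^{-p₂} a^{k₂} t^{p₂+c₂}`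
(with `p₁, p₂ ≥ 0`) iff `c₁ = c₂` and `k₁/n^{p₁} = k₂/n^{p₂}` in `ℚ`. -/
theorem stmt2 (n : ℤ) (hn : 2 ≤ n) (p₁ p₂ k₁ k₂ c₁ c₂ : ℤ) (hp₁ : 0 ≤ p₁) (hp₂ : 0 ≤ p₂) :
    (BSt n) ^ (-p₁) * (BSa n) ^ k₁ * (BSt n) ^ (p₁ + c₁)
      = (BSt n) ^ (-p₂) * (BSa n) ^ k₂ * (BSt n) ^ (p₂ + c₂) ↔
    c₁ = c₂ ∧ (k₁ : ℚ) / (n : ℚ) ^ p₁ = (k₂ : ℚ) / (n : ℚ) ^ p₂ := by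
  have hn2 : (2:ℚ) ≤ (n:ℚ) := by exact_mod_cast hn
  have hnpos : (0:ℚ) < (n:ℚ) := by linarith
  have hn0 : (n:ℚ) ≠ 0 := ne_of_gt hnpos
  have hn1 : (n:ℚ) ≠ 1 := by linarith
  constructor
  · intro hEq
    have h := congrArg (BSmap n hn0) hEq
    simp only [map_mul, map_zpow, BSmap_a, BSmap_t, mulLeft₀_zpow, addRight_zpow] at h
    have key : ∀ x:ℚ, (n:ℚ)^(-p₁) * ((n:ℚ)^(p₁+c₁) * x + k₁)
        = (n:ℚ)^(-p₂) * ((n:ℚ)^(p₂+c₂) * x + k₂) := by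
      intro x
      have := Equiv.ext_iff.mp h x
      simpa [Equiv.Perm.mul_apply] using this
    have hc : (n:ℚ)^c₁ = (n:ℚ)^c₂ := by
      have h2 : (n:ℚ)^(-p₁) * (n:ℚ)^(p₁+c₁) = (n:ℚ)^(-p₂) * (n:ℚ)^(p₂+c₂) := by
        linear_combination key 1 - key 0
      rwa [← zpow_add₀ hn0, ← zpow_add₀ hn0, show -p₁+(p₁+c₁) = c₁ by ring,
        show -p₂+(p₂+c₂) = c₂ by ring] at h2
    refine ⟨zpow_right_injective₀ hnpos hn1 hc, ?_⟩
    have hkq : (n:ℚ)^(-p₁) * k₁ = (n:ℚ)^(-p₂) * k₂ := by simpa using key 0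
    rw [div_eq_inv_mul, div_eq_inv_mul, ← zpow_neg, ← zpow_neg]
    exact hkq
  · rintro ⟨rfl, hq⟩
    have key : ∀ pa pb ka kb : ℤ, pa ≤ pb → 0 ≤ pa →
        (ka : ℚ) / (n : ℚ) ^ pa = (kb : ℚ) / (n : ℚ) ^ pb →
        (BSt n) ^ (-pa) * (BSa n) ^ ka * (BSt n) ^ (pa + c₁)
          = (BSt n) ^ (-pb) * (BSa n) ^ kb * (BSt n) ^ (pb + c₁) := by
      intro pa pb ka kb hab ha hq
      apply BS_back n pa pb ka kb c₁ hab
      have hd : ((pb-pa).toNat : ℤ) = pb - pa := Int.toNat_of_nonneg (by omega)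
      have hcast : ((n^(pb-pa).toNat * ka : ℤ) : ℚ) = (kb : ℚ) := by
        push_cast
        rw [← zpow_natCast (n:ℚ), hd, zpow_sub₀ hn0]
        have hza : ((n:ℚ))^pa ≠ 0 := zpow_ne_zero _ hn0
        have hzb : ((n:ℚ))^pb ≠ 0 := zpow_ne_zero _ hn0
        field_simp at hq ⊢
        linear_combination hq
      exact_mod_cast hcast.symm
    rcases le_total p₁ p₂ with h | h
    · exact key p₁ p₂ k₁ k₂ h hp₁ hq
    · exact (key p₂ p₁ k₂ k₁ h hp₂ hq.symm).symm
end

section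
/- For each α ∈ ℤ[1/n] and β ∈ ℤ[1/n], the assignment a ↦ a^α, t ↦ a^β t extends to an endomorphism φ_{α,β} of BS(n,1), i.e., it preserves the relation t⁻¹aⁿt = a. -/
lemma conj_zpow' {G : Type*} [Group G] (x g : G) (m : ℤ) :
    (x⁻¹ * g * x) ^ m = x⁻¹ * g ^ m * x := by
  have := conj_zpow (i := m) (a := x⁻¹) (b := g)
  simpa using this

lemma bs_base (n : ℤ) : (BSt n)⁻¹ * (BSa n) ^ n * BSt n = BSa n := by
  have h : PresentedGroup.mk (BSrel n)
      ((FreeGroup.of true)⁻¹ * (FreeGroup.of false) ^ n * FreeGroup.of true *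
        (FreeGroup.of false)⁻¹) = 1 := by
    apply (QuotientGroup.eq_one_iff _).mpr
    exact Subgroup.subset_normalClosure rfl
  have h2 : (BSt n)⁻¹ * (BSa n) ^ n * BSt n * (BSa n)⁻¹ = 1 := by
    simpa [BSt, BSa, PresentedGroup.of] using h
  calc (BSt n)⁻¹ * (BSa n) ^ n * BSt n
      = ((BSt n)⁻¹ * (BSa n) ^ n * BSt n * (BSa n)⁻¹) * BSa n := by group
    _ = BSa n := by rw [h2]; group

lemma bs_conj (n m : ℤ) : (BSt n)⁻¹ * (BSa n) ^ (n * m) * BSt n = (BSa n) ^ m := by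
  rw [zpow_mul, ← conj_zpow' (BSt n) ((BSa n) ^ n) m, bs_base]

lemma bs_conj_pow (n m : ℤ) (j : ℕ) :
    (BSt n) ^ (-(j : ℤ)) * (BSa n) ^ (n ^ j * m) * (BSt n) ^ (j : ℤ) = (BSa n) ^ m := by
  induction j generalizing m with
  | zero => simp
  | succ j ih =>
      have key : (BSa n) ^ (n ^ (j+1) * m) = (BSt n) * (BSa n) ^ (n ^ j * m) * (BSt n)⁻¹ := by
        have h : (BSa n) ^ (n * (n ^ j * m)) = (BSt n) * (BSa n) ^ (n ^ j * m) * (BSt n)⁻¹ := by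
          rw [← bs_conj n (n ^ j * m)]; group
        rw [show n ^ (j+1) * m = n * (n ^ j * m) by ring, h]
      rw [key]
      have h2 : (BSt n) ^ (-((j:ℤ)+1)) * ((BSt n) * (BSa n) ^ (n ^ j * m) * (BSt n)⁻¹) *
          (BSt n) ^ ((j:ℤ)+1)
          = (BSt n) ^ (-(j:ℤ)) * (BSa n) ^ (n ^ j * m) * (BSt n) ^ (j:ℤ) := by group
      push_cast
      rw [h2, ih]

lemma apow_shift (n k p : ℤ) (j : ℕ) : apow n (k * n ^ j) (p + j) = apow n k p := by
  unfold apow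
  calc (BSt n) ^ (-(p + (j:ℤ))) * (BSa n) ^ (k * n ^ j) * (BSt n) ^ (p + (j:ℤ))
      = (BSt n) ^ (-p) * ((BSt n) ^ (-(j:ℤ)) * (BSa n) ^ (n ^ j * k) * (BSt n) ^ (j:ℤ)) *
        (BSt n) ^ p := by rw [mul_comm k]; group
    _ = (BSt n) ^ (-p) * (BSa n) ^ k * (BSt n) ^ p := by rw [bs_conj_pow]

lemma apow_add (n x y s : ℤ) : apow n x s * apow n y s = apow n (x + y) s := by
  unfold apow
  rw [zpow_add]
  group

lemma apow_comm (n k p l q : ℤ) (hp : 0 ≤ p) (hq : 0 ≤ q) :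
    apow n k p * apow n l q = apow n l q * apow n k p := by
  obtain ⟨P, rfl⟩ := Int.eq_ofNat_of_zero_le hp
  obtain ⟨Q, rfl⟩ := Int.eq_ofNat_of_zero_le hq
  rw [← apow_shift n k P Q, ← apow_shift n l Q P,
    show ((Q:ℤ) + P) = ((P:ℤ) + Q) from add_comm _ _, apow_add, apow_add, add_comm]

lemma apow_zpow (n k p m : ℤ) : (apow n k p) ^ m = apow n (k * m) p := by
  unfold apow
  rw [show (BSt n) ^ (-p) = ((BSt n) ^ p)⁻¹ from zpow_neg _ _, conj_zpow', ← zpow_mul]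

/-- For `α = k/nᵖ` and `β = l/n^q` in `ℤ[1/n]`, the assignment
`a ↦ a^α`, `t ↦ a^β t` preserves the defining relation `t⁻¹aⁿt = a` of `BS(n,1)`,
hence extends to an endomorphism `φ_{α,β}` of `BS(n,1)`. -/
theorem stmt10 (n : ℤ) (hn : 2 ≤ n) (k p l q : ℤ) (hp : 0 ≤ p) (hq : 0 ≤ q) :
    ∀ r ∈ BSrel n,
      FreeGroup.lift (fun b : Bool => if b then apow n l q * BSt n else apow n k p) r = 1 := by
  intro r hr
  rcases hr with rfl
  set α := apow n k p with hα
  set β := apow n l q with hβ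
  have e : FreeGroup.lift (fun b : Bool => if b then apow n l q * BSt n else apow n k p)
      ((FreeGroup.of true)⁻¹ * (FreeGroup.of false) ^ n * FreeGroup.of true *
        (FreeGroup.of false)⁻¹)
      = (β * BSt n)⁻¹ * α ^ n * (β * BSt n) * α⁻¹ := by
    simp [hα, hβ]
  rw [e]
  have hcomm : α ^ n * β = β * α ^ n := by
    rw [hα, hβ, apow_zpow]
    exact apow_comm n (k * n) p l q hp hq
  have key : (BSt n)⁻¹ * α ^ n * BSt n = α := by
    rw [hα, apow_zpow n k p n]
    have h1 : (BSt n)⁻¹ * apow n (k * n) p * BSt n = apow n (k * n) (p + 1) := by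
      unfold apow
      rw [show -(p+1) = -p + (-1) by ring, zpow_add, zpow_add]
      group
    rw [h1]
    simpa using apow_shift n k p 1
  have step1 : (β * BSt n)⁻¹ * α ^ n * (β * BSt n) * α⁻¹
      = (BSt n)⁻¹ * (β⁻¹ * (α ^ n * β)) * BSt n * α⁻¹ := by group
  rw [step1, hcomm, inv_mul_cancel_left, key]
  group
end

section
/- For n ≥ 2 and c ≥ 0, two elements a^{k₁/n^{p₁}} t^{c} and a^{k₂/n^{p₂}} t^{c} of BS(n,1) (with c ≥ 1) are conjugate if and only if there exists r ∈ {0, 1, ..., c-1} such that k₂ ≡ k₁ n^r (mod n^c - 1). -/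
namespace Stmt15Aux

lemma bs_rel (n : ℤ) : (BSt n)⁻¹ * (BSa n) ^ n * BSt n = BSa n := by
  have h : ((FreeGroup.of true)⁻¹ * (FreeGroup.of false) ^ n * FreeGroup.of true *
      (FreeGroup.of false)⁻¹ : FreeGroup Bool) ∈ Subgroup.normalClosure (BSrel n) :=
    Subgroup.subset_normalClosure rfl
  have h2 : (PresentedGroup.mk (BSrel n)) ((FreeGroup.of true)⁻¹ * (FreeGroup.of false) ^ n *
      FreeGroup.of true * (FreeGroup.of false)⁻¹) = 1 := (QuotientGroup.eq_one_iff _).mpr h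
  have h3 : (BSt n)⁻¹ * (BSa n) ^ n * BSt n * (BSa n)⁻¹ = 1 := by
    simpa [BSt, BSa, PresentedGroup.of, map_mul, map_zpow, map_inv] using h2
  have := mul_eq_one_iff_eq_inv.mp h3
  simpa using this

lemma tinv_conj_zpow (n k : ℤ) : (BSt n)⁻¹ * (BSa n) ^ (n * k) * BSt n = (BSa n) ^ k := by
  have : (BSt n)⁻¹ * (BSa n) ^ n * BSt n = (BSt n)⁻¹ * (BSa n) ^ n * ((BSt n)⁻¹)⁻¹ := by group
  calc (BSt n)⁻¹ * (BSa n) ^ (n * k) * BSt n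
      = ((BSt n)⁻¹ * (BSa n) ^ n * ((BSt n)⁻¹)⁻¹) ^ k := by
        rw [conj_zpow, ← zpow_mul]; group
    _ = (BSa n) ^ k := by rw [← this, bs_rel]

lemma apow_succ (n k p : ℤ) : apow n k p = apow n (n * k) (p + 1) := by
  have h := tinv_conj_zpow n k
  unfold apow
  calc (BSt n) ^ (-p) * (BSa n) ^ k * (BSt n) ^ p
      = (BSt n) ^ (-(p+1)) * (BSt n * (BSa n) ^ k * (BSt n)⁻¹) * (BSt n) ^ (p+1) := by group
    _ = (BSt n) ^ (-(p+1)) * (BSa n) ^ (n*k) * (BSt n) ^ (p+1) := by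
        rw [show BSt n * (BSa n) ^ k * (BSt n)⁻¹ = (BSa n) ^ (n*k) by
          rw [← h]; group]

lemma apow_shift (n k p : ℤ) (j : ℕ) : apow n k p = apow n (n ^ j * k) (p + j) := by
  induction j with
  | zero => simp
  | succ j ih =>
      rw [ih, apow_succ]
      congr 1
      · ring
      · push_cast; ring

lemma apow_add (n k l p : ℤ) : apow n k p * apow n l p = apow n (k + l) p := by
  unfold apow
  rw [zpow_add]
  group

end Stmt15Aux

namespace Stmt15Aux

lemma apow_neg (n M p : ℤ) : (apow n M p)⁻¹ = apow n (-M) p := by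
  have h : apow n M p * apow n (-M) p = 1 := by
    rw [apow_add]; simp [apow]
  exact inv_eq_of_mul_eq_one_right h

lemma tpow_mul_apow (n j p : ℤ) (c : ℕ) :
    (BSt n) ^ (c : ℕ) * apow n j p = apow n (n ^ c * j) p * (BSt n) ^ (c : ℕ) := by
  have h : apow n j (p - c) = apow n (n ^ c * j) p := by
    rw [apow_shift n j (p - c) c]
    congr 1
    ring
  rw [← h]
  unfold apow
  rw [show ((BSt n) ^ (c:ℕ) : BS n) = (BSt n) ^ ((c:ℤ)) by norm_cast]
  group

lemma tpow_conj (n k p : ℤ) (r c : ℕ) :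
    (BSt n) ^ r * (apow n k p * (BSt n) ^ c) * ((BSt n) ^ r)⁻¹ =
      apow n (n ^ r * k) p * (BSt n) ^ c := by
  have h := tpow_mul_apow n k p r
  calc (BSt n) ^ r * (apow n k p * (BSt n) ^ c) * ((BSt n) ^ r)⁻¹
      = ((BSt n) ^ r * apow n k p) * ((BSt n) ^ c * ((BSt n) ^ r)⁻¹) := by group
    _ = (apow n (n ^ r * k) p * (BSt n) ^ r) * ((BSt n) ^ c * ((BSt n) ^ r)⁻¹) := by rw [h]
    _ = apow n (n ^ r * k) p * (BSt n) ^ c := by group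

lemma apow_conj (n M K p : ℤ) (c : ℕ) :
    apow n M p * (apow n K p * (BSt n) ^ c) * (apow n M p)⁻¹ =
      apow n (K + (1 - n ^ c) * M) p * (BSt n) ^ c := by
  have h1 : (BSt n) ^ c * (apow n M p)⁻¹ = apow n (-(n ^ c * M)) p * (BSt n) ^ c := by
    rw [apow_neg, tpow_mul_apow]
    ring_nf
  calc apow n M p * (apow n K p * (BSt n) ^ c) * (apow n M p)⁻¹
      = (apow n M p * apow n K p) * ((BSt n) ^ c * (apow n M p)⁻¹) := by group
    _ = apow n (M + K) p * (apow n (-(n ^ c * M)) p * (BSt n) ^ c) := by rw [apow_add, h1]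
    _ = (apow n (M + K) p * apow n (-(n ^ c * M)) p) * (BSt n) ^ c := by group
    _ = apow n (K + (1 - n ^ c) * M) p * (BSt n) ^ c := by rw [apow_add]; ring_nf

end Stmt15Aux

namespace Stmt15Aux

lemma backward (n : ℤ) (k₁ p₁ k₂ p₂ : ℤ) (hp₁ : 0 ≤ p₁) (hp₂ : 0 ≤ p₂)
    (c : ℕ) (hc : 1 ≤ c) (r : ℕ) (hr : r < c)
    (hmod : k₂ ≡ k₁ * n ^ r [ZMOD (n ^ c - 1)]) :
    IsConj (apow n k₁ p₁ * (BSt n) ^ c) (apow n k₂ p₂ * (BSt n) ^ c) := by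
  obtain ⟨d, rfl⟩ : ∃ d, c = d + 1 := ⟨c - 1, by omega⟩
  set q₁ := p₂.toNat with hq₁
  set q₂ := p₁.toNat with hq₂
  have hq₁' : (q₁ : ℤ) = p₂ := Int.toNat_of_nonneg hp₂
  have hq₂' : (q₂ : ℤ) = p₁ := Int.toNat_of_nonneg hp₁
  set P : ℤ := p₁ + p₂ with hP
  set K₁ : ℤ := n ^ q₁ * k₁ with hK₁
  set K₂ : ℤ := n ^ q₂ * k₂ with hK₂
  have e₁ : apow n k₁ p₁ = apow n K₁ P := by
    rw [apow_shift n k₁ p₁ q₁]; congr 1; rw [hq₁']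
  have e₂ : apow n k₂ p₂ = apow n K₂ P := by
    rw [apow_shift n k₂ p₂ q₂]; congr 1; rw [hq₂', hP]; ring
  set r' : ℕ := r + q₂ + q₁ * d with hr'
  have hnc : (n ^ (d + 1) : ℤ) ≡ 1 [ZMOD (n ^ (d + 1) - 1)] :=
    Int.ModEq.symm (Int.modEq_iff_dvd.mpr (by simp))
  have hKmod : K₂ ≡ K₁ * n ^ r' [ZMOD (n ^ (d + 1) - 1)] := by
    have h1 : K₁ * n ^ r' = k₁ * n ^ r * n ^ q₂ * (n ^ (d + 1)) ^ q₁ := by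
      rw [hK₁, hr']; ring
    have h2 : K₁ * n ^ r' ≡ k₁ * n ^ r * n ^ q₂ * 1 ^ q₁ [ZMOD (n ^ (d + 1) - 1)] := by
      rw [h1]
      exact (Int.ModEq.refl _).mul (hnc.pow q₁)
    have h3 : K₂ ≡ k₁ * n ^ r * n ^ q₂ * 1 ^ q₁ [ZMOD (n ^ (d + 1) - 1)] := by
      simp only [one_pow, mul_one]
      calc K₂ = k₂ * n ^ q₂ := by rw [hK₂]; ring
        _ ≡ (k₁ * n ^ r) * n ^ q₂ [ZMOD (n ^ (d + 1) - 1)] := hmod.mul_right _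
    exact h3.trans h2.symm
  obtain ⟨M, hM⟩ : (n ^ (d + 1) - 1 : ℤ) ∣ (K₁ * n ^ r' - K₂) := hKmod.dvd
  rw [isConj_iff]
  refine ⟨apow n M P * (BSt n) ^ r', ?_⟩
  rw [e₁, e₂]
  have step1 : (apow n M P * (BSt n) ^ r') * (apow n K₁ P * (BSt n) ^ (d + 1)) *
      (apow n M P * (BSt n) ^ r')⁻¹ =
      apow n M P * ((BSt n) ^ r' * (apow n K₁ P * (BSt n) ^ (d + 1)) * ((BSt n) ^ r')⁻¹) *
        (apow n M P)⁻¹ := by group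
  rw [step1, tpow_conj, apow_conj]
  congr 2
  have : (1 - n ^ (d + 1)) * M = K₂ - K₁ * n ^ r' := by linarith [hM]
  rw [this]; ring

end Stmt15Aux

namespace Stmt15Aux

open Multiplicative SemidirectProduct

/-- `AddAut A` as `MulAut (Multiplicative A)`, as a monoid hom. -/
def addAutToMulAut (A : Type*) [AddGroup A] :
    Multiplicative (AddAut A) →* MulAut (Multiplicative A) where
  toFun f := AddEquiv.toMultiplicative (Multiplicative.toAdd f)
  map_one' := rfl
  map_mul' _ _ := rfl

/-- Action of `Multiplicative ℤ` on `Multiplicative (ZMod m)` by multiplication by `u^z`. -/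
def phiAct (m : ℕ) (u : (ZMod m)ˣ) :
    Multiplicative ℤ →* MulAut (Multiplicative (ZMod m)) :=
  (addAutToMulAut (ZMod m)).comp ((AddAut.mulLeft).comp (zpowersHom (ZMod m)ˣ u))

lemma phiAct_apply (m : ℕ) (u : (ZMod m)ˣ) (z : ℤ) (x : ZMod m) :
    phiAct m u (ofAdd z) (ofAdd x) = ofAdd ((↑(u ^ z) : ZMod m) * x) := rfl

lemma phiAct_inv_apply (m : ℕ) (u : (ZMod m)ˣ) (z : ℤ) (x : ZMod m) :
    (phiAct m u (ofAdd z))⁻¹ (ofAdd x) = ofAdd ((↑(u ^ (-z)) : ZMod m) * x) := by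
  rw [← map_inv]
  rfl

abbrev Gsd (m : ℕ) (u : (ZMod m)ˣ) : Type :=
  Multiplicative (ZMod m) ⋊[phiAct m u] Multiplicative ℤ

example (m : ℕ) (u : (ZMod m)ˣ) (x : ZMod m) (z : ℤ) :
    ((inl (ofAdd x) : Gsd m u) * inr (ofAdd z)).left = ofAdd x := by
  simp

end Stmt15Aux

namespace Stmt15Aux

open Multiplicative SemidirectProduct

section Hom

variable (n : ℤ) (m : ℕ) (u : (ZMod m)ˣ) (hu : (u : ZMod m) = (n : ZMod m))

/-- The map on generators. -/
def fGen : Bool → Gsd m u := fun b =>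
  if b then inr (ofAdd (1 : ℤ)) else inl (ofAdd (1 : ZMod m))

lemma relator_maps (hu : (u : ZMod m) = (n : ZMod m)) :
    ∀ r ∈ BSrel n, FreeGroup.lift (fGen m u) r = 1 := by
  intro rel hrel
  rw [BSrel, Set.mem_singleton_iff] at hrel
  subst hrel
  simp only [map_mul, map_inv, map_zpow, FreeGroup.lift_apply_of, fGen, if_true, if_false,
    Bool.false_eq_true]
  have h1 : ((inl (ofAdd (1 : ZMod m)) : Gsd m u)) ^ n = inl (ofAdd ((n : ZMod m))) := by
    rw [← map_zpow]
    congr 1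
    rw [← ofAdd_zsmul, zsmul_eq_mul, mul_one]
  rw [h1]
  have h2 : ((inr (ofAdd (1 : ℤ)) : Gsd m u))⁻¹ * inl (ofAdd ((n : ZMod m))) *
      inr (ofAdd (1 : ℤ)) = inl ((phiAct m u (ofAdd (1:ℤ)))⁻¹ (ofAdd ((n : ZMod m)))) := by
    rw [inl_aut_inv, map_inv]
  rw [h2]
  have h3 : (phiAct m u (ofAdd (1:ℤ)))⁻¹ (ofAdd ((n : ZMod m))) = ofAdd (1 : ZMod m) := by
    have : (phiAct m u (ofAdd (1:ℤ)))⁻¹ = phiAct m u (ofAdd (-1:ℤ)) := by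
      rw [← map_inv]; rfl
    rw [this, phiAct_apply, ← hu]
    congr 1
    rw [zpow_neg, zpow_one, Units.inv_mul]
  rw [h3, mul_inv_cancel]

/-- The homomorphism `BS n →* Gsd m u`. -/
def bsHom (hu : (u : ZMod m) = (n : ZMod m)) : BS n →* Gsd m u :=
  PresentedGroup.toGroup (relator_maps n m u hu)

lemma bsHom_a : bsHom n m u hu (BSa n) = inl (ofAdd (1 : ZMod m)) :=
  PresentedGroup.toGroup.of _

lemma bsHom_t : bsHom n m u hu (BSt n) = inr (ofAdd (1 : ℤ)) :=
  PresentedGroup.toGroup.of _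

lemma bsHom_apow_t (k p : ℤ) (c : ℕ) :
    bsHom n m u hu (apow n k p * (BSt n) ^ c) =
      inl (ofAdd ((↑(u ^ (-p)) : ZMod m) * (k : ZMod m))) * inr (ofAdd (c : ℤ)) := by
  have ha : bsHom n m u hu ((BSa n) ^ k) = inl (ofAdd ((k : ZMod m))) := by
    rw [map_zpow, bsHom_a, ← map_zpow]
    congr 1
    rw [← ofAdd_zsmul, zsmul_eq_mul, mul_one]
  have ht : ∀ q : ℤ, bsHom n m u hu ((BSt n) ^ q) = inr (ofAdd q) := by
    intro q
    rw [map_zpow, bsHom_t, ← map_zpow]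
    congr 1
    rw [← ofAdd_zsmul, smul_eq_mul, mul_one]
  have htc : bsHom n m u hu ((BSt n) ^ c) = inr (ofAdd ((c : ℤ))) := by
    rw [← zpow_natCast, ht]
  rw [map_mul, apow, map_mul, map_mul, ha, ht, ht, htc]
  ext
  · simp [mul_left, phiAct_apply, phiAct_inv_apply, zpow_neg]
    rw [← zpow_neg]
    exact congrArg toAdd (phiAct_inv_apply m u p k)
  · simp [mul_right]

end Hom

end Stmt15Aux

namespace Stmt15Aux

open Multiplicative SemidirectProduct

lemma forward (n : ℤ) (hn : 2 ≤ n) (k₁ p₁ k₂ p₂ : ℤ) (c : ℕ) (hc : 1 ≤ c)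
    (h : IsConj (apow n k₁ p₁ * (BSt n) ^ c) (apow n k₂ p₂ * (BSt n) ^ c)) :
    ∃ r : ℕ, r < c ∧ k₂ ≡ k₁ * n ^ r [ZMOD (n ^ c - 1)] := by
  set m : ℕ := (n ^ c - 1).toNat with hmdef
  have hnc1 : (1 : ℤ) ≤ n ^ c := one_le_pow₀ (by omega)
  have hm : ((m : ℕ) : ℤ) = n ^ c - 1 := Int.toNat_of_nonneg (by omega)
  -- `n^c = 1` in `ZMod m`
  have hpow : ((n : ZMod m)) ^ c = 1 := by
    have h1 : ((n ^ c : ℤ) : ZMod m) = ((1 : ℤ) : ZMod m) := by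
      rw [ZMod.intCast_eq_intCast_iff]
      exact Int.ModEq.symm (Int.modEq_iff_dvd.mpr (by rw [hm]))
    push_cast at h1
    exact h1
  obtain ⟨d, hd⟩ : ∃ d, c = d + 1 := ⟨c - 1, by omega⟩
  have hval : (n : ZMod m) * (n : ZMod m) ^ d = 1 := by
    rw [← pow_succ', ← hd, hpow]
  have hval' : (n : ZMod m) ^ d * (n : ZMod m) = 1 := by
    rw [← pow_succ, ← hd, hpow]
  set u : (ZMod m)ˣ := ⟨(n : ZMod m), (n : ZMod m) ^ d, hval, hval'⟩ with hudef
  have hu : (u : ZMod m) = (n : ZMod m) := rfl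
  have huc : u ^ (c : ℤ) = 1 := by
    ext
    rw [zpow_natCast, Units.val_pow_eq_pow_val, hu, hpow, Units.val_one]
  -- map the conjugacy to the semidirect product
  have h' := (bsHom n m u hu).map_isConj h
  rw [bsHom_apow_t, bsHom_apow_t] at h'
  obtain ⟨g, hg⟩ := isConj_iff.mp h'
  have hmul : g * (inl (ofAdd ((↑(u ^ (-p₁)) : ZMod m) * (k₁ : ZMod m))) *
      inr (ofAdd (c : ℤ))) =
      (inl (ofAdd ((↑(u ^ (-p₂)) : ZMod m) * (k₂ : ZMod m))) * inr (ofAdd (c : ℤ))) * g := by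
    rw [← hg]; group
  have hleft := congrArg SemidirectProduct.left hmul
  simp only [mul_left, left_inl, left_inr, mul_right, right_inl, right_inr, map_one, mul_one,
    one_mul] at hleft
  -- convert to an equation in `ZMod m`
  have hAdd := congrArg toAdd hleft
  simp only [toAdd_mul] at hAdd
  have hphi : ∀ (g' : Multiplicative ℤ) (x : Multiplicative (ZMod m)),
      toAdd (phiAct m u g' x) = (↑(u ^ toAdd g') : ZMod m) * toAdd x := fun _ _ => rfl
  rw [hphi, hphi] at hAdd
  set z : ZMod m := toAdd g.left with hz
  set r : ℤ := toAdd g.right with hrr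
  have hAdd2 : z + (↑(u ^ r) : ZMod m) * ((↑(u ^ (-p₁)) : ZMod m) * (k₁ : ZMod m)) =
      (↑(u ^ (-p₂)) : ZMod m) * (k₂ : ZMod m) + z := by
    simp only [toAdd_ofAdd] at hAdd
    rw [huc] at hAdd
    simpa using hAdd
  have e1 : (↑(u ^ r) : ZMod m) * ((↑(u ^ (-p₁)) : ZMod m) * (k₁ : ZMod m)) =
      (↑(u ^ (-p₂)) : ZMod m) * (k₂ : ZMod m) := by
    have := hAdd2
    rw [add_comm ((↑(u ^ (-p₂)) : ZMod m) * (k₂ : ZMod m)) z] at this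
    exact add_left_cancel this
  have e2 : (↑(u ^ (p₂ + (r + -p₁))) : ZMod m) * (k₁ : ZMod m) = (k₂ : ZMod m) := by
    have := congrArg (fun x => (↑(u ^ p₂) : ZMod m) * x) e1
    simp only [← mul_assoc, ← Units.val_mul, ← zpow_add] at this
    rw [show p₂ + -p₂ = 0 by ring] at this
    simpa [← mul_assoc, ← Units.val_mul, ← zpow_add] using this
  set s : ℤ := p₂ + (r + -p₁) with hs
  set r' : ℕ := (s % c).toNat with hr'def
  have hcpos : (0 : ℤ) < c := by exact_mod_cast hc
  have hr'eq : (r' : ℤ) = s % c := Int.toNat_of_nonneg (Int.emod_nonneg s (by omega))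
  have hr'lt : r' < c := by
    have := Int.emod_lt_of_pos s hcpos
    omega
  have hus : u ^ s = u ^ (r' : ℤ) := by
    conv_lhs => rw [← Int.mul_ediv_add_emod s c]
    rw [zpow_add, zpow_mul, huc, one_zpow, one_mul, hr'eq]
  have key : ((k₂ : ℤ) : ZMod m) = ((k₁ * n ^ r' : ℤ) : ZMod m) := by
    push_cast
    rw [← e2, hus, zpow_natCast, Units.val_pow_eq_pow_val, hu]
    ring
  refine ⟨r', hr'lt, ?_⟩
  rw [← hm]
  exact (ZMod.intCast_eq_intCast_iff _ _ _).mp key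

end Stmt15Aux

/-- For `n ≥ 2` and `c ≥ 1`, the elements `a^{k₁/n^{p₁}} t^c` and
`a^{k₂/n^{p₂}} t^c` of `BS(n,1)` are conjugate iff `k₂ ≡ k₁ n^r (mod n^c - 1)` for some
`r ∈ {0, 1, …, c-1}`. -/
theorem stmt15 (n : ℤ) (hn : 2 ≤ n) (k₁ p₁ k₂ p₂ : ℤ) (hp₁ : 0 ≤ p₁) (hp₂ : 0 ≤ p₂)
    (c : ℕ) (hc : 1 ≤ c) :
    IsConj (apow n k₁ p₁ * (BSt n) ^ c) (apow n k₂ p₂ * (BSt n) ^ c) ↔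
      ∃ r : ℕ, r < c ∧ k₂ ≡ k₁ * n ^ r [ZMOD (n ^ c - 1)] := by
  constructor
  · exact Stmt15Aux.forward n hn k₁ p₁ k₂ p₂ c hc
  · rintro ⟨r, hr, hmod⟩
    exact Stmt15Aux.backward n k₁ p₁ k₂ p₂ hp₁ hp₂ c hc r hr hmod
end
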